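/- arXiv:1707.00477 — 2 statements merged into one kernel-verified Lean document; each statement's English description precedes it below -/
import Mathlib

section
/- Let n ≥ 4 be an even integer and let C be a locally optimal coloring of K_n. Then for every color μ, every connected component of the graph formed by the μ-colored edges is either a single edge or a path with exactly two edges. -/
open Finset

/-- A (not necessarily proper) coloring of the edges of `K_n` with the colors `{1, …, n-1}`
(modeled as `Fin (n-1)`).  The values on diagonal elements of `Sym2 (Fin n)` are irrelevant. -/
def EdgeColoring (n : ℕ) : Type := Sym2 (Fin n) → Fin (n - 1)

/-- `aCount C u μ` is the number of `μ`-colored edges of `C` incident with the vertex `u`. -/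
def aCount {n : ℕ} (C : EdgeColoring n) (u : Fin n) (μ : Fin (n - 1)) : ℕ :=
  (Finset.univ.filter (fun v : Fin n => v ≠ u ∧ C s(u, v) = μ)).card

/-- `Phi C = Σ_{u,μ} a_{u,μ}(C)²`. -/
def Phi {n : ℕ} (C : EdgeColoring n) : ℕ :=
  ∑ u : Fin n, ∑ μ : Fin (n - 1), (aCount C u μ) ^ 2

/-- `Psi C` is the number of unordered pairs of distinct incident edges of `K_n` receiving the
same color under `C` (counted as ordered pairs and divided by two). -/
def Psi {n : ℕ} (C : EdgeColoring n) : ℕ :=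
  ((Finset.univ : Finset (Sym2 (Fin n) × Sym2 (Fin n))).filter
    (fun p => ¬ p.1.IsDiag ∧ ¬ p.2.IsDiag ∧ p.1 ≠ p.2 ∧
      (∃ x : Fin n, x ∈ p.1 ∧ x ∈ p.2) ∧ C p.1 = C p.2)).card / 2

/-- `C'` differs from `C` on exactly one edge. -/
def DiffersOnOneEdge {n : ℕ} (C C' : EdgeColoring n) : Prop :=
  ∃ e : Sym2 (Fin n), ¬ e.IsDiag ∧ C' e ≠ C e ∧
    ∀ f : Sym2 (Fin n), ¬ f.IsDiag → f ≠ e → C' f = C f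

/-- A coloring is locally optimal if no single-edge recoloring decreases `Psi`. -/
def LocallyOptimal {n : ℕ} (C : EdgeColoring n) : Prop :=
  ∀ C' : EdgeColoring n, DiffersOnOneEdge C C' → Psi C ≤ Psi C'

/-- A one-factorization: a proper edge coloring of `K_n` with the `n-1` colors. -/
def IsOneFactorization {n : ℕ} (C : EdgeColoring n) : Prop :=
  ∀ e f : Sym2 (Fin n), ¬ e.IsDiag → ¬ f.IsDiag → e ≠ f →
    (∃ x : Fin n, x ∈ e ∧ x ∈ f) → C e ≠ C f

/-- The graph formed by the `μ`-colored edges of `C`. -/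
def monoGraph {n : ℕ} (C : EdgeColoring n) (μ : Fin (n - 1)) : SimpleGraph (Fin n) where
  Adj x y := x ≠ y ∧ C s(x, y) = μ
  symm := ⟨fun x y h => ⟨h.1.symm, by rw [Sym2.eq_swap]; exact h.2⟩⟩
  loopless := ⟨fun x h => h.1 rfl⟩

/-- An IV coloring: for every color `μ`, every connected component of the graph formed by the
`μ`-colored edges is either a single edge or a path with exactly two edges. -/
def IsIVColoring {n : ℕ} (C : EdgeColoring n) : Prop :=
  ∀ μ : Fin (n - 1), ∀ x : Fin n, (∃ y, (monoGraph C μ).Adj x y) →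
    (∃ u v : Fin n, (monoGraph C μ).Adj u v ∧
        {w | (monoGraph C μ).Reachable x w} = {u, v}) ∨
    (∃ u v w : Fin n, (monoGraph C μ).Adj u v ∧ (monoGraph C μ).Adj v w ∧
        u ≠ w ∧ ¬ (monoGraph C μ).Adj u w ∧
        {t | (monoGraph C μ).Reachable x t} = {u, v, w})

/-- `C'` is obtained from `C` by a `(u,v)`-flip. -/
def IsFlip {n : ℕ} (C C' : EdgeColoring n) (u v : Fin n) : Prop :=
  C' s(u, v) = C s(u, v) ∧
  (∀ e : Sym2 (Fin n), ¬ e.IsDiag → u ∉ e → v ∉ e → C' e = C e) ∧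
  ∀ w : Fin n, w ≠ u → w ≠ v →
    ((C' s(w, u) = C s(w, u) ∧ C' s(w, v) = C s(w, v)) ∨
     (C' s(w, u) = C s(w, v) ∧ C' s(w, v) = C s(w, u)))

/-- The edges of `K_n` with both endpoints in `S`. -/
def edgesIn {n : ℕ} (S : Finset (Fin n)) : Finset (Sym2 (Fin n)) :=
  Finset.univ.filter (fun e => ¬ e.IsDiag ∧ ∀ x : Fin n, x ∈ e → x ∈ S)

/-- `gammaColors C S`: the number of distinct colors on edges with both endpoints in `S`. -/
def gammaColors {n : ℕ} (C : EdgeColoring n) (S : Finset (Fin n)) : ℕ :=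
  ((edgesIn S).image C).card

/-- The deficit `D(S) = C(|S|, 2) - γ(S)`. -/
def deficit {n : ℕ} (C : EdgeColoring n) (S : Finset (Fin n)) : ℤ :=
  (Nat.choose S.card 2 : ℤ) - gammaColors C S

/-!
Write `a u μ` for `aCount C u μ`. Counting the ordered pairs of incident equally colored edges by
their common vertex shows that there are `Φ - n (n - 1) = ∑ a u μ (a u μ - 1)` of them, and `Ψ` is
half of that. Recoloring an edge `uv` from `μ` to `ν` changes `Φ` by
`2 (a u ν + a v ν - a u μ - a v μ) + 4`. If `a u μ + a v μ ≥ 4`, the other `n - 2` colors share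
at most `2 n - 6` incidences at `u` and `v`, so one of them has `a u ν + a v ν ≤ 1`, and
recoloring `uv` with it lowers `Ψ`. Hence in a locally optimal coloring the degrees of the two ends
of every edge of the color class `μ` add up to at most `3`, and a graph with this property has only
single edges and paths of length two as nontrivial components.
-/

lemma sum_add_add_eq_of_eq_off_pair {ι M : Type*} [Fintype ι] [DecidableEq ι]
    [AddCommMonoid M] {f g : ι → M} {a b : ι} (hab : a ≠ b)
    (h : ∀ i, i ≠ a → i ≠ b → f i = g i) : ∑ i, f i + g a + g b = ∑ i, g i + f a + f b := by
  have hsplit : ∀ k : ι → M, ∑ i, k i = k a + k b + ∑ i ∈ univ \ {a, b}, k i := fun k => by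
    rw [← sum_sdiff (subset_univ {a, b}), sum_pair hab, add_comm]
  have hrest : ∑ i ∈ univ \ {a, b}, f i = ∑ i ∈ univ \ {a, b}, g i :=
    sum_congr rfl fun i hi => by
      simp only [mem_sdiff, mem_univ, mem_insert, mem_singleton, true_and, not_or] at hi
      exact h i hi.1 hi.2
  rw [hsplit f, hsplit g, hrest]
  abel

lemma sum_sq_add_of_add_ite_eq {ι : Type*} [Fintype ι] [DecidableEq ι] {f g : ι → ℕ} {μ ν : ι}
    (hμν : μ ≠ ν) (h : ∀ i, g i + (if μ = i then 1 else 0) = f i + (if ν = i then 1 else 0)) :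
    ∑ i, g i ^ 2 + 2 * f μ = ∑ i, f i ^ 2 + 2 * f ν + 2 := by
  have hμ := h μ
  have hν := h ν
  simp only [hμν, hμν.symm, if_true, if_false, add_zero] at hμ hν
  have hsum := sum_add_add_eq_of_eq_off_pair (f := fun i => g i ^ 2) (g := fun i => f i ^ 2)
    hμν fun i hi hi' => by simpa [Ne.symm hi, Ne.symm hi'] using h i
  rw [← hμ, hν] at hsum
  rw [← hμ]
  ring_nf at hsum ⊢
  omega

namespace SimpleGraph

variable {V : Type*} {G : SimpleGraph V}

lemma setOf_reachable_eq_of_adj_closed {S : Set V} {x : V} (hx : x ∈ S)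
    (hclosed : ∀ a ∈ S, ∀ b, G.Adj a b → b ∈ S) (hreach : ∀ s ∈ S, G.Reachable x s) :
    {t | G.Reachable x t} = S := by
  have walk_mem : ∀ {a t : V}, G.Walk a t → a ∈ S → t ∈ S := by
    intro a t w ha
    induction w with
    | nil => exact ha
    | cons hab _ ih => exact ih (hclosed _ ha _ hab)
  exact Set.Subset.antisymm (fun _ ⟨w⟩ => walk_mem w hx) hreach

lemma setOf_reachable_eq_of_reachable {x y : V} (h : G.Reachable x y) :
    {t | G.Reachable x t} = {t | G.Reachable y t} :=
  Set.ext fun _ => ⟨h.symm.trans, h.trans⟩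

variable [G.LocallyFinite]

lemma eq_of_adj_of_degree_eq_one {x y z : V} (hx : G.degree x = 1) (hy : G.Adj x y)
    (hz : G.Adj x z) : z = y := by
  obtain ⟨w, -, hw⟩ := degree_eq_one_iff_existsUnique_adj.mp hx
  rw [hw z hz, hw y hy]

lemma exists_adj_adj_of_degree_eq_two {c : V} (hc : G.degree c = 2) :
    ∃ a b, G.Adj c a ∧ G.Adj c b ∧ a ≠ b ∧ ∀ w, G.Adj c w → w = a ∨ w = b := by
  classical
  obtain ⟨a, b, hab, hN⟩ := Finset.card_eq_two.mp hc
  have hmem : ∀ w, G.Adj c w ↔ w = a ∨ w = b := fun w => by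
    rw [← mem_neighborFinset, hN, Finset.mem_insert, Finset.mem_singleton]
  exact ⟨a, b, (hmem a).2 (.inl rfl), (hmem b).2 (.inr rfl), hab, fun w => (hmem w).1⟩

lemma setOf_reachable_eq_pair {x y : V} (hxy : G.Adj x y) (hx : G.degree x = 1)
    (hy : G.degree y = 1) : {t | G.Reachable x t} = {x, y} := by
  refine setOf_reachable_eq_of_adj_closed (.inl rfl) ?_ ?_
  · rintro a (rfl | rfl) b hab
    · exact .inr (eq_of_adj_of_degree_eq_one hx hxy hab)
    · exact .inl (eq_of_adj_of_degree_eq_one hy hxy.symm hab)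
  · rintro s (rfl | rfl)
    exacts [.refl s, hxy.reachable]

lemma degree_eq_one_of_adj_of_degree_add_le_three
    (hG : ∀ x y, G.Adj x y → G.degree x + G.degree y ≤ 3) {c a : V} (hc : G.degree c = 2)
    (hca : G.Adj c a) : G.degree a = 1 := by
  have := hG c a hca
  have := G.degree_pos_iff_exists_adj a |>.mpr ⟨c, hca.symm⟩
  omega

lemma exists_path_of_degree_eq_two (hG : ∀ x y, G.Adj x y → G.degree x + G.degree y ≤ 3)
    {c : V} (hc : G.degree c = 2) :
    ∃ a b, G.Adj a c ∧ G.Adj c b ∧ a ≠ b ∧ ¬ G.Adj a b ∧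
      {t | G.Reachable c t} = {a, c, b} := by
  obtain ⟨a, b, hca, hcb, hab, hN⟩ := exists_adj_adj_of_degree_eq_two hc
  have ha := degree_eq_one_of_adj_of_degree_add_le_three hG hc hca
  have hb := degree_eq_one_of_adj_of_degree_add_le_three hG hc hcb
  refine ⟨a, b, hca.symm, hcb, hab, fun hab' => hcb.ne ?_, ?_⟩
  · exact (eq_of_adj_of_degree_eq_one ha hca.symm hab').symm
  refine setOf_reachable_eq_of_adj_closed (.inr (.inl rfl)) ?_ ?_
  · rintro s (rfl | rfl | rfl) w hw
    · exact .inr (.inl (eq_of_adj_of_degree_eq_one ha hca.symm hw))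
    · rcases hN w hw with rfl | rfl
      exacts [.inl rfl, .inr (.inr rfl)]
    · exact .inr (.inl (eq_of_adj_of_degree_eq_one hb hcb.symm hw))
  · rintro s (rfl | rfl | rfl)
    exacts [hca.reachable, .refl s, hcb.reachable]

theorem edge_or_path_of_degree_add_le_three
    (hG : ∀ x y, G.Adj x y → G.degree x + G.degree y ≤ 3) {x y : V} (hxy : G.Adj x y) :
    (∃ u v, G.Adj u v ∧ {w | G.Reachable x w} = {u, v}) ∨
    (∃ u v w, G.Adj u v ∧ G.Adj v w ∧ u ≠ w ∧ ¬ G.Adj u w ∧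
        {t | G.Reachable x t} = {u, v, w}) := by
  have := hG x y hxy
  have := G.degree_pos_iff_exists_adj x |>.mpr ⟨y, hxy⟩
  have := G.degree_pos_iff_exists_adj y |>.mpr ⟨x, hxy.symm⟩
  obtain ⟨hx, hy⟩ | ⟨c, hc, hxc⟩ : (G.degree x = 1 ∧ G.degree y = 1) ∨
      ∃ c, G.degree c = 2 ∧ G.Reachable x c := by
    by_cases hx : G.degree x = 2
    · exact .inr ⟨x, hx, .refl x⟩
    by_cases hy : G.degree y = 2
    · exact .inr ⟨y, hy, hxy.reachable⟩
    omega
  · exact .inl ⟨x, y, hxy, setOf_reachable_eq_pair hxy hx hy⟩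
  · obtain ⟨a, b, hac, hcb, hab, hna, hcomp⟩ := exists_path_of_degree_eq_two hG hc
    exact .inr ⟨a, c, b, hac, hcb, hab, hna, (setOf_reachable_eq_of_reachable hxc).trans hcomp⟩

end SimpleGraph

section Coloring

variable {n : ℕ}

lemma aCount_eq_degree (C : EdgeColoring n) (u : Fin n) (μ : Fin (n - 1))
    [DecidableRel (monoGraph C μ).Adj] : aCount C u μ = (monoGraph C μ).degree u := by
  rw [← SimpleGraph.card_neighborFinset_eq_degree, SimpleGraph.neighborFinset_eq_filter]
  unfold aCount
  congr 1
  ext v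
  rw [mem_filter, mem_filter]
  simp [monoGraph, ne_comm]

lemma sum_aCount (C : EdgeColoring n) (u : Fin n) : ∑ μ, aCount C u μ = n - 1 := by
  classical
  have hfiber : ∀ μ, aCount C u μ = #{v ∈ univ.erase u | C s(u, v) = μ} := fun μ => by
    unfold aCount
    congr 1
    ext v
    simp [and_comm]
  simp only [hfiber]
  rw [← card_eq_sum_card_fiberwise fun _ _ => mem_univ _, card_erase_of_mem (mem_univ u),
    card_univ, Fintype.card_fin]

def incidentPairs (C : EdgeColoring n) : Finset (Sym2 (Fin n) × Sym2 (Fin n)) :=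
  univ.filter fun p => ¬ p.1.IsDiag ∧ ¬ p.2.IsDiag ∧ p.1 ≠ p.2 ∧
      (∃ x : Fin n, x ∈ p.1 ∧ x ∈ p.2) ∧ C p.1 = C p.2

lemma Psi_eq_card_incidentPairs (C : EdgeColoring n) : Psi C = #(incidentPairs C) / 2 := rfl

lemma card_sameColorNbrPairs (C : EdgeColoring n) (u : Fin n) :
    #{q ∈ (univ.erase u).offDiag | C s(u, q.1) = C s(u, q.2)} =
      ∑ μ, (aCount C u μ * aCount C u μ - aCount C u μ) := by
  classical
  rw [card_eq_sum_card_fiberwise (f := fun q => C s(u, q.1)) fun _ _ => mem_univ _]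
  refine sum_congr rfl fun μ _ => ?_
  rw [aCount, ← offDiag_card]
  congr 1
  ext ⟨v, w⟩
  simp only [mem_filter, mem_offDiag, mem_erase, mem_univ, and_true, true_and]
  constructor
  · rintro ⟨⟨⟨hv, hw, hvw⟩, hvw'⟩, rfl⟩
    exact ⟨⟨hv, rfl⟩, ⟨hw, hvw'.symm⟩, hvw⟩
  · rintro ⟨⟨hv, rfl⟩, ⟨hw, hw'⟩, hvw⟩
    exact ⟨⟨⟨hv, hw, hvw⟩, hw'.symm⟩, rfl⟩

lemma card_incidentPairs (C : EdgeColoring n) :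
    #(incidentPairs C) = ∑ u, #{q ∈ (univ.erase u).offDiag | C s(u, q.1) = C s(u, q.2)} := by
  classical
  rw [← card_sigma]
  symm
  refine card_bij (fun a _ => (s(a.1, a.2.1), s(a.1, a.2.2))) ?_ ?_ ?_
  · rintro ⟨u, v, w⟩ h
    simp only [mem_sigma, mem_filter, mem_offDiag, mem_erase, mem_univ, true_and, and_true] at h
    obtain ⟨⟨hv, hw, hvw⟩, hcol⟩ := h
    simp only [incidentPairs, mem_filter, mem_univ, true_and, Sym2.mk_isDiag_iff, ne_eq,
      Sym2.eq_iff, Sym2.mem_iff]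
    refine ⟨Ne.symm hv, Ne.symm hw, ?_, ⟨u, .inl rfl, .inl rfl⟩, hcol⟩
    rintro (⟨-, rfl⟩ | ⟨rfl, -⟩)
    exacts [hvw rfl, hw rfl]
  · rintro ⟨u, v, w⟩ h ⟨u', v', w'⟩ h' heq
    simp only [mem_sigma, mem_filter, mem_offDiag, mem_erase, mem_univ, true_and, and_true] at h h'
    simp only [Prod.mk.injEq, Sym2.eq_iff] at heq
    grind
  · rintro ⟨e, f⟩ hp
    simp only [incidentPairs, mem_filter, mem_univ, true_and] at hp
    obtain ⟨he, hf, hef, ⟨x, hxe, hxf⟩, hcol⟩ := hp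
    have hxe' := Sym2.other_spec hxe
    have hxf' := Sym2.other_spec hxf
    refine ⟨⟨x, Sym2.Mem.other hxe, Sym2.Mem.other hxf⟩, ?_, by simp only [hxe', hxf']⟩
    simp only [mem_sigma, mem_filter, mem_offDiag, mem_erase, mem_univ, true_and, and_true]
    refine ⟨⟨Sym2.other_ne he hxe, Sym2.other_ne hf hxf, fun h => hef ?_⟩, by rw [hxe', hxf', hcol]⟩
    rw [← hxe', ← hxf', h]

lemma card_incidentPairs_add (C : EdgeColoring n) : #(incidentPairs C) + n * (n - 1) = Phi C := by
  have hdeg : n * (n - 1) = ∑ u, ∑ μ, aCount C u μ := by simp [sum_aCount]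
  rw [card_incidentPairs, hdeg, ← sum_add_distrib, Phi]
  refine sum_congr rfl fun u _ => ?_
  rw [card_sameColorNbrPairs, ← sum_add_distrib]
  exact sum_congr rfl fun μ _ => by rw [Nat.sub_add_cancel (Nat.le_mul_self _), sq]

section Recolor

def recolor (C : EdgeColoring n) (e : Sym2 (Fin n)) (ν : Fin (n - 1)) : EdgeColoring n :=
  Function.update C e ν

variable (C : EdgeColoring n) {u v : Fin n} (ν : Fin (n - 1))

@[simp]
lemma recolor_self (e : Sym2 (Fin n)) : recolor C e ν e = ν :=
  Function.update_self ..

lemma recolor_of_ne {e f : Sym2 (Fin n)} (h : f ≠ e) : recolor C e ν f = C f :=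
  Function.update_of_ne h ..

lemma aCount_recolor_of_ne {w : Fin n} (hwu : w ≠ u) (hwv : w ≠ v) (ξ : Fin (n - 1)) :
    aCount (recolor C s(u, v) ν) w ξ = aCount C w ξ := by
  unfold aCount
  congr 1
  refine filter_congr fun x _ => ?_
  have hne : s(w, x) ≠ s(u, v) := fun h => by
    have hw : w ∈ s(u, v) := h ▸ Sym2.mem_mk_left w x
    rcases Sym2.mem_iff.mp hw with rfl | rfl
    exacts [hwu rfl, hwv rfl]
  rw [recolor_of_ne C ν hne]

lemma aCount_eq_ite_add_sum (huv : u ≠ v) (ξ : Fin (n - 1)) :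
    aCount C u ξ = (if C s(u, v) = ξ then 1 else 0) +
      ∑ x ∈ univ.erase v, if x ≠ u ∧ C s(u, x) = ξ then 1 else 0 := by
  rw [aCount, card_filter, ← add_sum_erase _ _ (mem_univ v)]
  simp [huv.symm]

lemma aCount_recolor_add_ite (huv : u ≠ v) (ξ : Fin (n - 1)) :
    aCount (recolor C s(u, v) ν) u ξ + (if C s(u, v) = ξ then 1 else 0) =
      aCount C u ξ + (if ν = ξ then 1 else 0) := by
  rw [aCount_eq_ite_add_sum _ huv, aCount_eq_ite_add_sum C huv, recolor_self]
  have hrest : ∑ x ∈ univ.erase v,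
      (if x ≠ u ∧ recolor C s(u, v) ν s(u, x) = ξ then 1 else 0) =
      ∑ x ∈ univ.erase v, if x ≠ u ∧ C s(u, x) = ξ then 1 else 0 :=
    sum_congr rfl fun x hx => by
      rw [recolor_of_ne C ν fun h => ne_of_mem_erase hx (Sym2.congr_right.mp h)]
  rw [hrest]
  ring

lemma Phi_recolor_add (huv : u ≠ v) (hν : C s(u, v) ≠ ν) :
    Phi (recolor C s(u, v) ν) + 2 * (aCount C u (C s(u, v)) + aCount C v (C s(u, v))) =
      Phi C + 2 * (aCount C u ν + aCount C v ν) + 4 := by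
  have hu := sum_sq_add_of_add_ite_eq hν (aCount_recolor_add_ite C ν huv)
  have hv := sum_sq_add_of_add_ite_eq (Sym2.eq_swap (a := u) ▸ hν)
    (aCount_recolor_add_ite C ν huv.symm)
  rw [Sym2.eq_swap (a := v)] at hv
  have hrest := sum_add_add_eq_of_eq_off_pair
    (f := fun w => ∑ ξ, aCount (recolor C s(u, v) ν) w ξ ^ 2)
    (g := fun w => ∑ ξ, aCount C w ξ ^ 2) huv fun w hwu hwv => by
      simp only [aCount_recolor_of_ne C ν hwu hwv]
  unfold Phi
  omega

end Recolor

lemma differsOnOneEdge_recolor (C : EdgeColoring n) {u v : Fin n} (huv : u ≠ v)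
    {ν : Fin (n - 1)} (hν : C s(u, v) ≠ ν) : DiffersOnOneEdge C (recolor C s(u, v) ν) :=
  ⟨s(u, v), Sym2.mk_isDiag_iff.not.mpr huv, by rw [recolor_self]; exact hν.symm,
    fun _ _ hf => recolor_of_ne C ν hf⟩

lemma exists_aCount_add_aCount_le_one (C : EdgeColoring n) (u v : Fin n) {μ : Fin (n - 1)}
    (hμ : 4 ≤ aCount C u μ + aCount C v μ) :
    ∃ ν, μ ≠ ν ∧ aCount C u ν + aCount C v ν ≤ 1 := by
  have htotal := add_sum_erase univ (fun ξ => aCount C u ξ + aCount C v ξ) (mem_univ μ)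
  rw [sum_add_distrib (s := univ), sum_aCount, sum_aCount] at htotal
  have hcard : #(univ.erase μ) = n - 1 - 1 := by
    rw [card_erase_of_mem (mem_univ μ), card_univ, Fintype.card_fin]
  obtain ⟨ν, hν, hlt⟩ := exists_lt_of_sum_lt (s := univ.erase μ)
    (f := fun ξ => aCount C u ξ + aCount C v ξ) (g := fun _ => 2) (by
      rw [sum_const, hcard, smul_eq_mul]
      have := μ.is_lt
      omega)
  exact ⟨ν, (ne_of_mem_erase hν).symm, by omega⟩

lemma LocallyOptimal.aCount_add_aCount_le_three {C : EdgeColoring n} (hC : LocallyOptimal C)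
    {u v : Fin n} (huv : u ≠ v) : aCount C u (C s(u, v)) + aCount C v (C s(u, v)) ≤ 3 := by
  by_contra! hlarge
  obtain ⟨ν, hν, hsmall⟩ := exists_aCount_add_aCount_le_one C u v hlarge
  have hPsi := hC _ (differsOnOneEdge_recolor C huv hν)
  have hPhi := Phi_recolor_add C ν huv hν
  have hC₀ := card_incidentPairs_add C
  have hC₁ := card_incidentPairs_add (recolor C s(u, v) ν)
  rw [Psi_eq_card_incidentPairs, Psi_eq_card_incidentPairs] at hPsi
  omega

end Coloring

theorem locally_optimal_isIV_general (n : ℕ)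
    (C : EdgeColoring n) (hC : LocallyOptimal C) :
    IsIVColoring C := by
  classical
  intro μ x ⟨y, hxy⟩
  refine (monoGraph C μ).edge_or_path_of_degree_add_le_three (fun a b ⟨hab, hcol⟩ => ?_) hxy
  rw [← aCount_eq_degree, ← aCount_eq_degree, ← hcol]
  exact hC.aCount_add_aCount_le_three hab

/-- In a locally optimal coloring, for every color every connected component of
the graph formed by the edges of that color is a single edge or a path with exactly two edges. -/
theorem locally_optimal_isIV (n : ℕ) (hn : Even n) (h4 : 4 ≤ n)
    (C : EdgeColoring n) (hC : LocallyOptimal C) :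
    IsIVColoring C :=
  locally_optimal_isIV_general n C hC
end

section
/- For every positive integer a there exist a constant b > 0 and an integer n₀ such that every cubic (3-regular) simple graph on n ≥ n₀ vertices has a set W of at most b·log n vertices that spans at least |W| + a edges. -/
/-!
Grow breadth-first balls `B r` around a vertex `v`, for `r` up to `R = O(a + log n)`.

If some `B r` spans at least `|B r| + a` edges, then at least `a + 1` of them are not edges of the
BFS tree. Their endpoints, together with their tree paths to `v`, form a set `W` of at most
`2 (a + 1) (r + 1)` vertices, which spans its `|W| - 1` tree edges and these `a + 1` edges.

Otherwise every ball is sparse, and in a cubic graph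
`3 |B r| ≤ 2 e(B (r + 1)) < 2 (|B (r + 1)| + a)`. So once `|B r| ≥ 4 a` the balls grow by a
factor `5 / 4` per step, which cannot go on for `R` steps. Hence some ball stops growing: it is
a component `C` with `3 |C| / 2 = e(C) < |C| + a`, so `|C| < 2 a`. A union `W` of such components
with `2 a ≤ |W| ≤ 4 a` spans `3 |W| / 2 ≥ |W| + a` edges.
-/

open Finset

lemma mul_pow_le_mul_pow_of_mul_le_mul {f : ℕ → ℕ} {m p q T : ℕ} (h0 : m ≤ f 0)
    (hf : ∀ t < T, p * f t ≤ q * f (t + 1)) {t : ℕ} (ht : t ≤ T) :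
    m * p ^ t ≤ f t * q ^ t := by
  induction t with
  | zero => simpa using h0
  | succ t ih =>
    calc m * p ^ (t + 1) = p * (m * p ^ t) := by ring
      _ ≤ p * (f t * q ^ t) := Nat.mul_le_mul_left p (ih (by omega))
      _ = p * f t * q ^ t := by ring
      _ ≤ q * f (t + 1) * q ^ t := Nat.mul_le_mul_right _ (hf t (by omega))
      _ = f (t + 1) * q ^ (t + 1) := by ring

namespace SimpleGraph

variable {V : Type*} (G : SimpleGraph V)

def restrict (S : Finset V) : SimpleGraph V where
  Adj x y := G.Adj x y ∧ x ∈ S ∧ y ∈ S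
  symm := ⟨fun _ _ h => ⟨h.1.symm, h.2.2, h.2.1⟩⟩
  loopless := ⟨fun x h => G.loopless.irrefl x h.1⟩

@[simp]
lemma restrict_adj {S : Finset V} {x y : V} :
    (G.restrict S).Adj x y ↔ G.Adj x y ∧ x ∈ S ∧ y ∈ S :=
  Iff.rfl

instance [DecidableEq V] [DecidableRel G.Adj] (S : Finset V) : DecidableRel (G.restrict S).Adj :=
  fun x y => inferInstanceAs (Decidable (G.Adj x y ∧ x ∈ S ∧ y ∈ S))

def AdjClosed (S : Finset V) : Prop := ∀ x ∈ S, ∀ y, G.Adj x y → y ∈ S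

lemma AdjClosed.union [DecidableEq V] {S T : Finset V} (hS : G.AdjClosed S) (hT : G.AdjClosed T) :
    G.AdjClosed (S ∪ T) := by
  intro x hx y hxy
  rcases mem_union.1 hx with hx | hx
  · exact mem_union_left T (hS x hx y hxy)
  · exact mem_union_right S (hT x hx y hxy)

lemma exists_adjClosed_card_between [Fintype V] [DecidableEq V] {m : ℕ}
    (hC : ∀ v, ∃ C, v ∈ C ∧ G.AdjClosed C ∧ #C ≤ m) {k : ℕ}
    (hk : k ≤ Fintype.card V) :
    ∃ W, G.AdjClosed W ∧ k ≤ #W ∧ #W ≤ k + m := by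
  induction k with
  | zero => exact ⟨∅, fun _ hx => absurd hx (notMem_empty _), by simp, by simp⟩
  | succ k ih =>
    obtain ⟨W, hW, hlo, hhi⟩ := ih (by omega)
    by_cases hk' : k + 1 ≤ #W
    · exact ⟨W, hW, hk', by omega⟩
    obtain ⟨v, -, hv⟩ := exists_mem_notMem_of_card_lt_card (s := W) (t := univ)
      (by rw [card_univ]; omega)
    obtain ⟨C, hvC, hC, hCm⟩ := hC v
    have := card_union_le W C
    have := card_le_card (insert_subset (mem_union_right W hvC) (subset_union_left (s₂ := C)))
    rw [card_insert_of_notMem hv] at this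
    exact ⟨W ∪ C, hW.union G hC, by omega, by omega⟩

section BFS

variable {v : V}

lemma exists_adj_dist_add_one_eq {u : V} (hu : G.Reachable v u) (hne : u ≠ v) :
    ∃ w, G.Adj w u ∧ G.dist v w + 1 = G.dist v u := by
  obtain ⟨p, hp⟩ := hu.symm.exists_walk_length_eq_dist
  obtain ⟨w, huw, q, rfl⟩ := p.exists_eq_cons_of_ne hne
  have hwv : G.dist v w ≤ q.length := G.dist_comm ▸ G.dist_le q
  have hvu : G.dist v u ≤ G.dist v w + 1 :=
    dist_eq_one_iff_adj.2 huw.symm ▸ (hu.trans huw.reachable).dist_triangle_left u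
  rw [Walk.length_cons, dist_comm] at hp
  exact ⟨w, huw.symm, by omega⟩

open Classical in
noncomputable def bfsParent (v u : V) : V :=
  if h : G.Reachable v u ∧ u ≠ v then (G.exists_adj_dist_add_one_eq h.1 h.2).choose else u

lemma bfsParent_spec {u : V} (hu : G.Reachable v u) (hne : u ≠ v) :
    G.Adj (G.bfsParent v u) u ∧ G.dist v (G.bfsParent v u) + 1 = G.dist v u := by
  rw [bfsParent, dif_pos ⟨hu, hne⟩]
  exact (G.exists_adj_dist_add_one_eq hu hne).choose_spec

lemma dist_iterate_bfsParent_add {x : V} (hx : G.Reachable v x) {i : ℕ} (hi : i ≤ G.dist v x) :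
    G.Reachable v ((G.bfsParent v)^[i] x) ∧
      G.dist v ((G.bfsParent v)^[i] x) + i = G.dist v x := by
  induction i with
  | zero => exact ⟨hx, rfl⟩
  | succ i ih =>
    obtain ⟨hr, hd⟩ := ih (by omega)
    have hne : (G.bfsParent v)^[i] x ≠ v := by
      rintro h
      rw [h, dist_self] at hd
      omega
    obtain ⟨hadj, hd'⟩ := G.bfsParent_spec hr hne
    rw [Function.iterate_succ_apply']
    exact ⟨hr.trans hadj.reachable.symm, by omega⟩

variable [DecidableEq V]

noncomputable def bfsAncestors (v x : V) : Finset V :=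
  (range (G.dist v x + 1)).image fun i => (G.bfsParent v)^[i] x

lemma card_bfsAncestors_le (x : V) : #(G.bfsAncestors v x) ≤ G.dist v x + 1 :=
  card_image_le.trans (card_range _).le

lemma self_mem_bfsAncestors (x : V) : x ∈ G.bfsAncestors v x :=
  mem_image.2 ⟨0, by simp, rfl⟩

lemma reachable_and_dist_le_of_mem_bfsAncestors {x u : V} (hx : G.Reachable v x)
    (hu : u ∈ G.bfsAncestors v x) : G.Reachable v u ∧ G.dist v u ≤ G.dist v x := by
  obtain ⟨i, hi, rfl⟩ := mem_image.1 hu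
  have := G.dist_iterate_bfsParent_add hx (Nat.lt_succ_iff.1 (mem_range.1 hi))
  exact ⟨this.1, by omega⟩

lemma bfsParent_mem_bfsAncestors {x u : V} (hx : G.Reachable v x)
    (hu : u ∈ G.bfsAncestors v x) (hne : u ≠ v) : G.bfsParent v u ∈ G.bfsAncestors v x := by
  obtain ⟨i, hi, rfl⟩ := mem_image.1 hu
  obtain ⟨hr, hd⟩ := G.dist_iterate_bfsParent_add hx (Nat.lt_succ_iff.1 (mem_range.1 hi))
  have := hr.pos_dist_of_ne hne.symm
  refine mem_image.2 ⟨i + 1, mem_range.2 (by omega), Function.iterate_succ_apply' ..⟩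

noncomputable def bfsTreeEdges (v : V) (S : Finset V) : Finset (Sym2 V) :=
  (S.erase v).image fun u => s(u, G.bfsParent v u)

lemma bfsTreeEdges_mono {S T : Finset V} (h : S ⊆ T) :
    G.bfsTreeEdges v S ⊆ G.bfsTreeEdges v T :=
  image_subset_image (erase_subset_erase v h)

lemma card_bfsTreeEdges {S : Finset V} (hS : ∀ u ∈ S, G.Reachable v u) :
    #(G.bfsTreeEdges v S) = #(S.erase v) := by
  refine card_image_of_injOn fun u hu u' hu' huu' => ?_
  obtain ⟨hne, huS⟩ := mem_erase.1 hu
  obtain ⟨hne', huS'⟩ := mem_erase.1 hu'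
  have hd := (G.bfsParent_spec (hS u huS) hne).2
  have hd' := (G.bfsParent_spec (hS u' huS') hne').2
  rcases Sym2.eq_iff.1 huu' with ⟨h, -⟩ | ⟨h, h'⟩
  · exact h
  · rw [h'] at hd
    rw [← h] at hd'
    omega

end BFS

section SpannedEdges

variable [Fintype V] [DecidableEq V] [DecidableRel G.Adj]

def spannedEdges (W : Finset V) : Finset (Sym2 V) :=
  G.edgeFinset.filter fun e => ∀ x ∈ e, x ∈ W

@[simp]
lemma mk_mem_spannedEdges {S : Finset V} {x y : V} :
    s(x, y) ∈ G.spannedEdges S ↔ G.Adj x y ∧ x ∈ S ∧ y ∈ S := by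
  simp [spannedEdges]

lemma edgeFinset_restrict (S : Finset V) : (G.restrict S).edgeFinset = G.spannedEdges S := by
  ext e
  induction e with
  | _ x y => simp

lemma degree_restrict_of_forall_adj_mem {S : Finset V} {u : V} (hu : u ∈ S)
    (h : ∀ y, G.Adj u y → y ∈ S) : (G.restrict S).degree u = G.degree u := by
  simp only [← card_neighborFinset_eq_degree]
  congr 1
  ext y
  simp only [mem_neighborFinset, restrict_adj]
  exact ⟨And.left, fun hy => ⟨hy, hu, h y hy⟩⟩

lemma degree_restrict_of_notMem {S : Finset V} {u : V} (hu : u ∉ S) :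
    (G.restrict S).degree u = 0 := by
  rw [← card_neighborFinset_eq_degree, card_eq_zero, eq_empty_iff_forall_notMem]
  exact fun y hy => hu ((mem_neighborFinset _ _ _).1 hy).2.1

lemma sum_degree_restrict (S : Finset V) :
    ∑ u ∈ S, (G.restrict S).degree u = 2 * #(G.spannedEdges S) := by
  rw [← edgeFinset_restrict, ← sum_degrees_eq_twice_card_edges]
  exact sum_subset (subset_univ S) fun u _ hu => G.degree_restrict_of_notMem hu

lemma sum_degree_le_two_mul_card_spannedEdges {S' S : Finset V} (hS' : S' ⊆ S)
    (h : ∀ x ∈ S', ∀ y, G.Adj x y → y ∈ S) :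
    ∑ u ∈ S', G.degree u ≤ 2 * #(G.spannedEdges S) := by
  rw [← sum_degree_restrict]
  calc ∑ u ∈ S', G.degree u = ∑ u ∈ S', (G.restrict S).degree u :=
        sum_congr rfl fun u hu => (G.degree_restrict_of_forall_adj_mem (hS' hu) (h u hu)).symm
    _ ≤ ∑ u ∈ S, (G.restrict S).degree u := sum_le_sum_of_subset hS'

lemma sum_degree_eq_two_mul_card_spannedEdges {S : Finset V} (hS : G.AdjClosed S) :
    ∑ u ∈ S, G.degree u = 2 * #(G.spannedEdges S) := by
  rw [← sum_degree_restrict]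
  exact sum_congr rfl fun u hu => (G.degree_restrict_of_forall_adj_mem hu (hS u hu)).symm


variable {v : V}

lemma bfsTreeEdges_subset_spannedEdges {S : Finset V} (hS : ∀ u ∈ S, G.Reachable v u)
    (hpar : ∀ u ∈ S, u ≠ v → G.bfsParent v u ∈ S) :
    G.bfsTreeEdges v S ⊆ G.spannedEdges S := by
  intro e he
  obtain ⟨u, hu, rfl⟩ := mem_image.1 he
  obtain ⟨hne, huS⟩ := mem_erase.1 hu
  exact G.mk_mem_spannedEdges.2
    ⟨(G.bfsParent_spec (hS u huS) hne).1.symm, huS, hpar u huS hne⟩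

lemma card_add_card_le_card_spannedEdges_add_one {S : Finset V} {F : Finset (Sym2 V)}
    (hS : ∀ u ∈ S, G.Reachable v u) (hpar : ∀ u ∈ S, u ≠ v → G.bfsParent v u ∈ S)
    (hF : F ⊆ G.spannedEdges S) (hdisj : Disjoint (G.bfsTreeEdges v S) F) :
    #S + #F ≤ #(G.spannedEdges S) + 1 := by
  have := card_le_card (union_subset (G.bfsTreeEdges_subset_spannedEdges hS hpar) hF)
  rw [card_union_of_disjoint hdisj, G.card_bfsTreeEdges hS] at this
  have := pred_card_le_card_erase (s := S) (a := v)
  omega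

end SpannedEdges

section Ball

variable [Fintype V] {v : V}

open Classical in
noncomputable def closedBall (v : V) (r : ℕ) : Finset V :=
  univ.filter fun u => G.Reachable v u ∧ G.dist v u ≤ r

lemma mem_closedBall {r : ℕ} {u : V} :
    u ∈ G.closedBall v r ↔ G.Reachable v u ∧ G.dist v u ≤ r := by
  simp [closedBall]

lemma self_mem_closedBall (v : V) (r : ℕ) : v ∈ G.closedBall v r :=
  G.mem_closedBall.2 ⟨.refl v, by simp⟩

lemma closedBall_mono {r s : ℕ} (h : r ≤ s) : G.closedBall v r ⊆ G.closedBall v s :=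
  fun _ hu => G.mem_closedBall.2 ⟨(G.mem_closedBall.1 hu).1, (G.mem_closedBall.1 hu).2.trans h⟩

lemma mem_closedBall_succ_of_adj {r : ℕ} {x y : V} (hx : x ∈ G.closedBall v r) (h : G.Adj x y) :
    y ∈ G.closedBall v (r + 1) := by
  obtain ⟨hr, hd⟩ := G.mem_closedBall.1 hx
  have := dist_eq_one_iff_adj.2 h ▸ hr.dist_triangle_left y
  exact G.mem_closedBall.2 ⟨hr.trans h.reachable, by omega⟩

variable [DecidableEq V]

lemma exists_bfsParent_closed_superset {r : ℕ} {X : Finset V} (hX : X ⊆ G.closedBall v r) :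
    ∃ W, X ⊆ W ∧ W ⊆ G.closedBall v r ∧ #W ≤ #X * (r + 1) ∧
      ∀ u ∈ W, u ≠ v → G.bfsParent v u ∈ W := by
  have hXr (x) (hx : x ∈ X) := G.mem_closedBall.1 (hX hx)
  refine ⟨X.biUnion (G.bfsAncestors v),
    fun x hx => mem_biUnion.2 ⟨x, hx, G.self_mem_bfsAncestors x⟩, fun u hu => ?_,
    card_biUnion_le_card_mul _ _ _ fun x hx => ?_, fun u hu hne => ?_⟩
  · obtain ⟨x, hx, hu⟩ := mem_biUnion.1 hu
    have := G.reachable_and_dist_le_of_mem_bfsAncestors (hXr x hx).1 hu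
    exact G.mem_closedBall.2 ⟨this.1, this.2.trans (hXr x hx).2⟩
  · exact (G.card_bfsAncestors_le x).trans (by have := (hXr x hx).2; omega)
  · obtain ⟨x, hx, hu⟩ := mem_biUnion.1 hu
    exact mem_biUnion.2 ⟨x, hx, G.bfsParent_mem_bfsAncestors (hXr x hx).1 hu hne⟩

variable [DecidableRel G.Adj]

lemma exists_small_dense_of_dense_closedBall {k r : ℕ}
    (h : #(G.closedBall v r) + k ≤ #(G.spannedEdges (G.closedBall v r))) :
    ∃ W : Finset V, #W ≤ 2 * (k + 1) * (r + 1) ∧ #W + k ≤ #(G.spannedEdges W) := by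
  set B := G.closedBall v r
  obtain ⟨F, hFB, hF⟩ : ∃ F ⊆ G.spannedEdges B \ G.bfsTreeEdges v B, #F = k + 1 := by
    refine exists_subset_card_eq ((le_card_sdiff _ _).trans' ?_)
    have hvB : v ∈ B := G.self_mem_closedBall v r
    rw [G.card_bfsTreeEdges fun u hu => (G.mem_closedBall.1 hu).1, card_erase_of_mem hvB]
    have := card_pos.2 ⟨v, hvB⟩
    omega
  set X := F.biUnion Sym2.toFinset
  have hXB : X ⊆ B := by
    intro x hx
    obtain ⟨e, he, hxe⟩ := mem_biUnion.1 hx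
    exact (mem_filter.1 (mem_sdiff.1 (hFB he)).1).2 x (Sym2.mem_toFinset.1 hxe)
  have hX : #X ≤ 2 * (k + 1) := by
    refine (card_biUnion_le_card_mul F _ 2 fun e _ => ?_).trans (by omega)
    rw [Sym2.card_toFinset]
    split_ifs <;> omega
  obtain ⟨W, hXW, hWB, hW, hpar⟩ := G.exists_bfsParent_closed_superset hXB
  have hFW : F ⊆ G.spannedEdges W := by
    intro e he
    refine mem_filter.2 ⟨(mem_filter.1 (mem_sdiff.1 (hFB he)).1).1, fun x hx => hXW ?_⟩
    exact mem_biUnion.2 ⟨e, he, Sym2.mem_toFinset.2 hx⟩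
  have hdisj : Disjoint (G.bfsTreeEdges v W) F :=
    Finset.disjoint_left.2 fun _ heW heF => (mem_sdiff.1 (hFB heF)).2 (G.bfsTreeEdges_mono hWB heW)
  have := G.card_add_card_le_card_spannedEdges_add_one
    (fun u hu => (G.mem_closedBall.1 (hWB hu)).1) hpar hFW hdisj
  refine ⟨W, hW.trans ?_, by omega⟩
  exact Nat.mul_le_mul_right _ hX

end Ball

section Cubic

variable [Fintype V] [DecidableEq V] [DecidableRel G.Adj] {v : V}

lemma three_mul_card_closedBall_le (hG : G.IsRegularOfDegree 3) (r : ℕ) :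
    3 * #(G.closedBall v r) ≤ 2 * #(G.spannedEdges (G.closedBall v (r + 1))) := by
  have := G.sum_degree_le_two_mul_card_spannedEdges (G.closedBall_mono (v := v) (r.le_add_right 1))
    fun _ hx _ => G.mem_closedBall_succ_of_adj hx
  rwa [sum_congr rfl fun u _ => hG.degree_eq u, sum_const, smul_eq_mul, mul_comm] at this

lemma two_mul_card_spannedEdges_eq (hG : G.IsRegularOfDegree 3) {S : Finset V}
    (hS : G.AdjClosed S) : 2 * #(G.spannedEdges S) = 3 * #S := by
  rw [← G.sum_degree_eq_two_mul_card_spannedEdges hS, sum_congr rfl fun u _ => hG.degree_eq u,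
    sum_const, smul_eq_mul, mul_comm]

lemma exists_closedBall_succ_eq (hG : G.IsRegularOfDegree 3) {a s : ℕ}
    (hs : Fintype.card V < 2 ^ s)
    (hsparse : ∀ r ≤ 4 * a + 4 * s,
      #(G.spannedEdges (G.closedBall v r)) < #(G.closedBall v r) + a) :
    ∃ r < 4 * a + 4 * s, G.closedBall v (r + 1) = G.closedBall v r := by
  by_contra! hgrow
  have hlin : ∀ t ≤ 4 * a + 4 * s, t + 1 ≤ #(G.closedBall v t) := by
    intro t ht
    induction t with
    | zero => exact card_pos.2 ⟨v, G.self_mem_closedBall v 0⟩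
    | succ t ih =>
      have := card_lt_card
        ((G.closedBall_mono (t.le_add_right 1)).ssubset_of_ne (hgrow t (by omega)).symm)
      have := ih (by omega)
      omega
  -- once a ball has `4 * a` vertices, sparsity of the next ball forces growth by a factor `5 / 4`
  have hstep : ∀ t < 4 * s,
      5 * #(G.closedBall v (4 * a + t)) ≤ 4 * #(G.closedBall v (4 * a + t + 1)) := by
    intro t ht
    have := G.three_mul_card_closedBall_le hG (v := v) (4 * a + t)
    have := hsparse (4 * a + t + 1) (by omega)
    have := hlin (4 * a + t) (by omega)
    omega
  have hgrowth := mul_pow_le_mul_pow_of_mul_le_mul (f := fun t => #(G.closedBall v (4 * a + t)))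
    (hlin (4 * a) (by omega)) hstep le_rfl
  have hcard := Nat.mul_le_mul_right (4 ^ (4 * s)) (card_le_univ (G.closedBall v (4 * a + 4 * s)))
  have hpow : 2 ^ s * 4 ^ (4 * s) ≤ 5 ^ (4 * s) := by
    rw [pow_mul, pow_mul, ← mul_pow]
    exact Nat.pow_le_pow_left (by norm_num) s
  have := Nat.mul_lt_mul_of_pos_right hs (pow_pos (by norm_num : 0 < 4) (4 * s))
  have := Nat.le_mul_of_pos_left (5 ^ (4 * s)) (by omega : 0 < 4 * a + 1)
  omega

lemma exists_small_dense_set (hG : G.IsRegularOfDegree 3) (a : ℕ)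
    (hn : 2 * a ≤ Fintype.card V) :
    ∃ W : Finset V, #W ≤ 2 * (a + 1) * (4 * a + 5) * (Nat.log 2 (Fintype.card V) + 1) ∧
      #W + a ≤ #(G.spannedEdges W) := by
  set s := Nat.log 2 (Fintype.card V) + 1
  have hs : 1 ≤ s := Nat.le_add_left 1 _
  by_cases hdense : ∃ v, ∃ r ≤ 4 * a + 4 * s,
      #(G.closedBall v r) + a ≤ #(G.spannedEdges (G.closedBall v r))
  · obtain ⟨v, r, hr, h⟩ := hdense
    obtain ⟨W, hW, hWdense⟩ := G.exists_small_dense_of_dense_closedBall h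
    refine ⟨W, hW.trans ?_, hWdense⟩
    have : r + 1 ≤ (4 * a + 5) * s := by nlinarith [Nat.mul_le_mul_left (4 * a + 1) hs]
    calc 2 * (a + 1) * (r + 1) ≤ 2 * (a + 1) * ((4 * a + 5) * s) := Nat.mul_le_mul_left _ this
      _ = _ := by ring
  · push Not at hdense
    have hC (v : V) : ∃ C, v ∈ C ∧ G.AdjClosed C ∧ #C ≤ 2 * a := by
      obtain ⟨r, hr, heq⟩ := G.exists_closedBall_succ_eq hG
        (Nat.lt_pow_succ_log_self one_lt_two _) fun r hr => hdense v r hr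
      have hcl : G.AdjClosed (G.closedBall v r) := fun x hx y hxy =>
        heq ▸ G.mem_closedBall_succ_of_adj hx hxy
      have := G.two_mul_card_spannedEdges_eq hG hcl
      have := hdense v r hr.le
      exact ⟨_, G.self_mem_closedBall v r, hcl, by omega⟩
    obtain ⟨W, hW, hlo, hhi⟩ := G.exists_adjClosed_card_between hC hn
    have := G.two_mul_card_spannedEdges_eq hG hW
    refine ⟨W, ?_, by omega⟩
    nlinarith [Nat.mul_le_mul_left (2 * (a + 1) * (4 * a + 5)) hs]

end Cubic

end SimpleGraph

lemma natLog_two_add_one_le_three_mul_log {n : ℕ} (hn : 2 ≤ n) :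
    (Nat.log 2 n + 1 : ℝ) ≤ 3 * Real.log n := by
  have hL : (1 : ℝ) ≤ Nat.log 2 n := by exact_mod_cast Nat.log_pos one_lt_two hn
  have hlogb := Real.natLog_le_logb n 2
  rw [Real.logb, Nat.cast_ofNat, le_div_iff₀ (Real.log_pos one_lt_two)] at hlogb
  have hn : (1 : ℝ) ≤ n := by exact_mod_cast hn.trans' one_le_two
  nlinarith [Real.log_two_gt_d9, Real.log_nonneg hn]

theorem cubic_graph_dense_small_set_general (a : ℕ) :
    ∃ (b : ℝ) (n₀ : ℕ), 0 < b ∧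
      ∀ (V : Type) [Fintype V] [DecidableEq V] (G : SimpleGraph V) [DecidableRel G.Adj],
        n₀ ≤ Fintype.card V → (∀ v : V, G.degree v = 3) →
        ∃ W : Finset V, (W.card : ℝ) ≤ b * Real.log (Fintype.card V) ∧
          W.card + a ≤ (G.edgeFinset.filter (fun e => ∀ x ∈ e, x ∈ W)).card := by
  set K := 2 * (a + 1) * (4 * a + 5)
  refine ⟨3 * K, 2 * a + 2, by positivity, fun V _ _ G _ hn hG => ?_⟩
  obtain ⟨W, hW, hdense⟩ := G.exists_small_dense_set hG a (by omega)
  refine ⟨W, ?_, hdense⟩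
  calc (W.card : ℝ) ≤ K * (Nat.log 2 (Fintype.card V) + 1 : ℝ) := by exact_mod_cast hW
    _ ≤ K * (3 * Real.log (Fintype.card V)) := by
      gcongr
      exact natLog_two_add_one_le_three_mul_log (by omega)
    _ = 3 * K * Real.log (Fintype.card V) := by ring

/-- For every positive integer `a` there are a constant `b > 0` and `n₀` such
that every cubic simple graph on `n ≥ n₀` vertices has a set `W` of at most `b·log n` vertices
spanning at least `|W| + a` edges. -/
theorem cubic_graph_dense_small_set (a : ℕ) (ha : 0 < a) :
    ∃ (b : ℝ) (n₀ : ℕ), 0 < b ∧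
      ∀ (V : Type) [Fintype V] [DecidableEq V] (G : SimpleGraph V) [DecidableRel G.Adj],
        n₀ ≤ Fintype.card V → (∀ v : V, G.degree v = 3) →
        ∃ W : Finset V, (W.card : ℝ) ≤ b * Real.log (Fintype.card V) ∧
          W.card + a ≤ (G.edgeFinset.filter (fun e => ∀ x ∈ e, x ∈ W)).card :=
  cubic_graph_dense_small_set_general a
end
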